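/- Let d ≥ 1 and s ≥ 1 be integers and let v ∈ ℝ^d be nonzero. Let d_0 = #{i : r_i ∈ [0, 2^{−s}]} and, for j = 0, …, s−1, let d_{j+1} = #{i : r_i ∈ (2^{j−s}, 2^{j+1−s}]}. Then the nonuniform quantization of v with the NUQSGD levels L̂ satisfies E[‖Q_s(v) − v‖²] ≤ ‖v‖² · ( min{ 2^{−2s} d_0/4 , 2^{−s} √d_0 } + Σ_{j=0}^{s−1} min{ 2^{2(j−s)} d_{j+1}/4 , 2^{j−s} √d_{j+1} } ). -/

import Mathlib

open MeasureTheory Real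

noncomputable section

/-- The index of the quantization bin containing the normalized coordinate `r`. -/
def levIdx (l : ℕ → ℝ) (s : ℕ) (r : ℝ) : ℕ := sSup {j | j ≤ s ∧ l j ≤ r}

/-- The probability of rounding the normalized coordinate `r` up to the next level. -/
def quantP (l : ℕ → ℝ) (s : ℕ) (r : ℝ) : ℝ :=
  (r - l (levIdx l s r)) / (l (levIdx l s r + 1) - l (levIdx l s r))

/-- The (random) nonuniform quantization of `v`, driven by the uniform noise vector `u`:
coordinate `i` is `‖v‖ · sign vᵢ · hᵢ`, where `hᵢ` is the upper adjacent level with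
probability `p(rᵢ)` and the lower adjacent level otherwise. -/
def quant (l : ℕ → ℝ) (s : ℕ) {d : ℕ} (v : EuclideanSpace ℝ (Fin d))
    (u : Fin d → ℝ) : EuclideanSpace ℝ (Fin d) :=
  WithLp.toLp 2 fun i =>
    ‖v‖ * Real.sign (v i) *
      (if u i ≤ quantP l s (|v i| / ‖v‖)
       then l (levIdx l s (|v i| / ‖v‖) + 1)
       else l (levIdx l s (|v i| / ‖v‖)))

/-- The uniform probability measure on the cube `[0,1]^d`, driving the quantization noise. -/
def unifCube (d : ℕ) : Measure (Fin d → ℝ) :=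
  Measure.pi fun _ => volume.restrict (Set.Icc (0:ℝ) 1)

/-- `l` is a valid sequence of quantization levels `l 0 = 0 < l 1 < ⋯ < l (s+1) = 1`. -/
def IsLevels (l : ℕ → ℝ) (s : ℕ) : Prop :=
  l 0 = 0 ∧ l (s+1) = 1 ∧ ∀ j ≤ s, l j < l (j+1)

/-- The exponentially spaced NUQSGD levels `(0, 2^{-s}, 2^{1-s}, …, 2^{-1}, 1)`:
`l 0 = 0` and `l j = 2^{j-1-s}` for `j = 1, …, s+1`. -/
def nuqLevels (s : ℕ) : ℕ → ℝ :=
  fun j => if j = 0 then 0 else 2 ^ ((j : ℤ) - 1 - (s : ℤ))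

/-!
Each coordinate is rounded independently and without bias to one of the two levels `l_ℓ ≤ r ≤
l_{ℓ+1}` adjacent to its normalized value `r = |vᵢ|/‖v‖`, so it contributes the two-point variance
`‖v‖² (r - l_ℓ)(l_{ℓ+1} - r)`. On a bin of width `τ` this is at most `τ²/4` (AM-GM) and at most
`τ r`; summed over the `d_m` coordinates of the bin, the second bound becomes `τ √d_m` by
Cauchy-Schwarz, since `∑ rᵢ² ≤ 1`. Every `r ∈ [0, 1]` lies in one of the bins `[l₀, l₁]`,
`(l_m, l_{m+1}]`, and for the NUQSGD levels these are `[0, 2^{-s}]` and `(2^{j-s}, 2^{j+1-s}]`,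
of widths `2^{-s}` and `2^{j-s}`.
-/

section Levels

variable {l : ℕ → ℝ} {s m : ℕ} {r : ℝ}

lemma IsLevels.strictMonoOn (hl : IsLevels l s) : StrictMonoOn l (Set.Iic (s + 1)) :=
  strictMonoOn_Iic_of_lt_succ fun m hm => hl.2.2 m (Nat.lt_succ_iff.mp hm)

lemma IsLevels.nonneg (hl : IsLevels l s) (hm : m ≤ s + 1) : 0 ≤ l m :=
  hl.1 ▸ hl.strictMonoOn.monotoneOn (Set.mem_Iic.2 (Nat.zero_le _)) hm (Nat.zero_le m)

lemma levIdx_le (l : ℕ → ℝ) (s : ℕ) (r : ℝ) : levIdx l s r ≤ s :=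
  csSup_le' fun _ hj => hj.1

lemma le_levIdx (hm : m ≤ s) (hr : l m ≤ r) : m ≤ levIdx l s r :=
  le_csSup ⟨s, fun _ hj => hj.1⟩ ⟨hm, hr⟩

lemma levels_levIdx_le (hm : m ≤ s) (hr : l m ≤ r) : l (levIdx l s r) ≤ r :=
  (Nat.sSup_mem (s := {j | j ≤ s ∧ l j ≤ r}) ⟨m, hm, hr⟩ ⟨s, fun _ hj => hj.1⟩).2

lemma le_levels_levIdx_succ (hr : r ≤ l (s + 1)) : r ≤ l (levIdx l s r + 1) := by
  rcases (levIdx_le l s r).eq_or_lt with h | h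
  · rwa [h]
  · by_contra! hlt
    have := le_levIdx h hlt.le
    omega

lemma IsLevels.mem_Icc_levIdx (hl : IsLevels l s) (hr : r ∈ Set.Icc 0 1) :
    r ∈ Set.Icc (l (levIdx l s r)) (l (levIdx l s r + 1)) :=
  ⟨levels_levIdx_le (Nat.zero_le s) (hl.1.trans_le hr.1),
    le_levels_levIdx_succ (hr.2.trans_eq hl.2.1.symm)⟩

def quantVar (l : ℕ → ℝ) (s : ℕ) (r : ℝ) : ℝ :=
  (r - l (levIdx l s r)) * (l (levIdx l s r + 1) - r)

/-- Any bracket of `r` computes `quantVar`: when `r` is a level, both adjacent brackets give `0`. -/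
lemma quantVar_eq_of_mem_Icc (hl : IsLevels l s) (hm : m ≤ s)
    (hr : r ∈ Set.Icc (l m) (l (m + 1))) : quantVar l s r = (r - l m) * (l (m + 1) - r) := by
  rcases (le_levIdx hm hr.1).eq_or_lt with h | h
  · rw [quantVar, ← h]
  · have hk : levIdx l s r ≤ s + 1 := (levIdx_le l s r).trans s.le_succ
    have hmk : l (m + 1) ≤ l (levIdx l s r) :=
      hl.strictMonoOn.monotoneOn (Set.mem_Iic.2 (by omega)) hk h
    have hkr := levels_levIdx_le hm hr.1
    rw [quantVar, le_antisymm hkr (hr.2.trans hmk), le_antisymm (hmk.trans hkr) hr.2]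
    ring

lemma quantVar_zero (hl : IsLevels l s) : quantVar l s 0 = 0 := by
  rw [quantVar_eq_of_mem_Icc hl (Nat.zero_le s) ⟨hl.1.le, hl.nonneg (by omega)⟩, hl.1]
  ring

lemma IsLevels.quantVar_nonneg (hl : IsLevels l s) (hr : r ∈ Set.Icc 0 1) :
    0 ≤ quantVar l s r :=
  mul_nonneg (sub_nonneg.2 (hl.mem_Icc_levIdx hr).1) (sub_nonneg.2 (hl.mem_Icc_levIdx hr).2)

/-- The bins counted by `d₀, d₁, …, d_s`. -/
def levelBin (l : ℕ → ℝ) : ℕ → Set ℝ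
  | 0 => Set.Icc (l 0) (l 1)
  | m + 1 => Set.Ioc (l (m + 1)) (l (m + 2))

lemma levelBin_subset_Icc (l : ℕ → ℝ) (m : ℕ) : levelBin l m ⊆ Set.Icc (l m) (l (m + 1)) := by
  cases m
  exacts [subset_rfl, Set.Ioc_subset_Icc_self]

lemma exists_mem_levelBin (hr : r ∈ Set.Icc (l 0) (l (s + 1))) :
    ∃ m ∈ Finset.range (s + 1), r ∈ levelBin l m := by
  classical
  have hex : ∃ m, r ≤ l (m + 1) := ⟨s, hr.2⟩
  refine ⟨Nat.find hex, Finset.mem_range_succ_iff.2 (Nat.find_min' hex hr.2), ?_⟩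
  have hmin : ∀ n < Nat.find hex, ¬r ≤ l (n + 1) := fun n => Nat.find_min hex
  generalize Nat.find hex = m, Nat.find_spec hex = hspec at hmin
  cases m with
  | zero => exact ⟨hr.1, hspec⟩
  | succ j => exact ⟨lt_of_not_ge (hmin j j.lt_succ_self), hspec⟩

end Levels

lemma two_point_variance {a b r : ℝ} (hab : a < b) :
    (r - a) / (b - a) * (b - r) ^ 2 + (1 - (r - a) / (b - a)) * (a - r) ^ 2 =
      (r - a) * (b - r) := by
  have hba : b - a ≠ 0 := (sub_pos.2 hab).ne'
  field_simp
  ring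

lemma mul_sub_le_min {a b r : ℝ} (ha : 0 ≤ a) (hr : r ∈ Set.Icc a b) :
    (r - a) * (b - r) ≤ min ((b - a) ^ 2 / 4) ((b - a) * r) := by
  obtain ⟨har, hrb⟩ := hr
  refine le_min (by nlinarith [sq_nonneg (2 * r - a - b)]) ?_
  rw [mul_comm]
  exact mul_le_mul (by linarith) (by linarith) (by linarith) (by linarith)

lemma sum_le_sqrt_card_of_sum_sq_le_one {ι : Type*} {B : Finset ι} {f : ι → ℝ}
    (h : ∑ i ∈ B, f i ^ 2 ≤ 1) : ∑ i ∈ B, f i ≤ √(B.card : ℝ) :=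
  (le_abs_self _).trans <| Real.abs_le_sqrt <| sq_sum_le_card_mul_sum_sq.trans <|
    mul_le_of_le_one_right (Nat.cast_nonneg _) h

lemma sum_mul_sub_le_min {ι : Type*} {B : Finset ι} {a b : ℝ} {r : ι → ℝ} (ha : 0 ≤ a)
    (hab : a ≤ b) (hr : ∀ i ∈ B, r i ∈ Set.Icc a b) (hsq : ∑ i ∈ B, r i ^ 2 ≤ 1) :
    ∑ i ∈ B, (r i - a) * (b - r i) ≤
      min ((b - a) ^ 2 * B.card / 4) ((b - a) * √(B.card : ℝ)) := by
  refine le_min ?_ ?_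
  · calc ∑ i ∈ B, (r i - a) * (b - r i) ≤ ∑ _i ∈ B, (b - a) ^ 2 / 4 :=
          Finset.sum_le_sum fun i hi => (mul_sub_le_min ha (hr i hi)).trans (min_le_left _ _)
      _ = (b - a) ^ 2 * B.card / 4 := by rw [Finset.sum_const, nsmul_eq_mul]; ring
  · calc ∑ i ∈ B, (r i - a) * (b - r i) ≤ ∑ i ∈ B, (b - a) * r i :=
          Finset.sum_le_sum fun i hi => (mul_sub_le_min ha (hr i hi)).trans (min_le_right _ _)
      _ = (b - a) * ∑ i ∈ B, r i := (Finset.mul_sum _ _ _).symm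
      _ ≤ (b - a) * √(B.card : ℝ) :=
          mul_le_mul_of_nonneg_left (sum_le_sqrt_card_of_sum_sq_le_one hsq) (sub_nonneg.2 hab)

lemma sum_quantVar_le_min {ι : Type*} {l : ℕ → ℝ} {s m : ℕ} (hl : IsLevels l s) (hm : m ≤ s)
    {B : Finset ι} {r : ι → ℝ} (hr : ∀ i ∈ B, r i ∈ Set.Icc (l m) (l (m + 1)))
    (hsq : ∑ i ∈ B, r i ^ 2 ≤ 1) :
    ∑ i ∈ B, quantVar l s (r i) ≤
      min ((l (m + 1) - l m) ^ 2 * B.card / 4) ((l (m + 1) - l m) * √(B.card : ℝ)) := by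
  rw [Finset.sum_congr rfl fun i hi => quantVar_eq_of_mem_Icc hl hm (hr i hi)]
  exact sum_mul_sub_le_min (hl.nonneg (by omega)) (hl.2.2 m hm).le hr hsq

lemma Finset.sum_le_sum_sum_of_forall_exists_mem {ι κ M : Type*} [Fintype ι] [DecidableEq κ]
    [AddCommMonoid M] [PartialOrder M] [IsOrderedAddMonoid M] {f : ι → M} (hf : ∀ i, 0 ≤ f i)
    {t : Finset κ} {B : κ → Finset ι} (hB : ∀ i, ∃ k ∈ t, i ∈ B k) :
    ∑ i, f i ≤ ∑ k ∈ t, ∑ i ∈ B k, f i := by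
  choose g hgt hgB using hB
  rw [← Finset.sum_fiberwise_of_maps_to (fun i _ => hgt i)]
  refine Finset.sum_le_sum fun k _ => Finset.sum_le_sum_of_subset_of_nonneg ?_ fun i _ _ => hf i
  intro i hi
  rw [← (Finset.mem_filter.1 hi).2]
  exact hgB i

instance : IsProbabilityMeasure (volume.restrict (Set.Icc (0 : ℝ) 1)) :=
  ⟨by simp⟩

lemma ite_le_eq_indicator_add (p A B : ℝ) :
    (fun x : ℝ => if x ≤ p then A else B) =
      fun x => (Set.Iic p).indicator (fun _ => A - B) x + B := by
  ext x
  by_cases hx : x ≤ p <;> simp [hx]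

lemma measurable_ite_le (p A B : ℝ) : Measurable fun x : ℝ => if x ≤ p then A else B :=
  Measurable.ite measurableSet_Iic measurable_const measurable_const

lemma integrable_ite_le (p A B : ℝ) :
    Integrable (fun x : ℝ => if x ≤ p then A else B) (volume.restrict (Set.Icc 0 1)) := by
  rw [ite_le_eq_indicator_add]
  exact ((integrable_const _).indicator measurableSet_Iic).add (integrable_const _)

lemma setIntegral_Icc_ite_le {p : ℝ} (hp0 : 0 ≤ p) (hp1 : p ≤ 1) (A B : ℝ) :
    ∫ x in Set.Icc (0 : ℝ) 1, (if x ≤ p then A else B) = p * A + (1 - p) * B := by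
  have hIic : Set.Iic p ∩ Set.Icc 0 1 = Set.Icc 0 p := by
    ext x
    simp only [Set.mem_inter_iff, Set.mem_Iic, Set.mem_Icc]
    exact ⟨fun ⟨h1, h2, _⟩ => ⟨h2, h1⟩, fun ⟨h1, h2⟩ => ⟨h2, h1, h2.trans hp1⟩⟩
  have hmeas : (volume.restrict (Set.Icc (0 : ℝ) 1)).real (Set.Iic p) = p := by
    rw [measureReal_restrict_apply measurableSet_Iic, hIic, Real.volume_real_Icc_of_le hp0,
      sub_zero]
  rw [ite_le_eq_indicator_add,
    integral_add ((integrable_const _).indicator measurableSet_Iic) (integrable_const _),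
    integral_indicator_const _ measurableSet_Iic, hmeas, integral_const, probReal_univ,
    smul_eq_mul, smul_eq_mul]
  ring

lemma unifCube_measurePreserving_eval {d : ℕ} (i : Fin d) :
    MeasurePreserving (Function.eval i) (unifCube d) (volume.restrict (Set.Icc (0 : ℝ) 1)) :=
  measurePreserving_eval _ i

lemma integrable_unifCube_ite_apply_le {d : ℕ} (i : Fin d) (p A B : ℝ) :
    Integrable (fun u : Fin d → ℝ => if u i ≤ p then A else B) (unifCube d) :=
  ((unifCube_measurePreserving_eval i).integrable_comp
    (measurable_ite_le p A B).aestronglyMeasurable).2 (integrable_ite_le p A B)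

lemma integral_unifCube_ite_apply_le {d : ℕ} (i : Fin d) {p : ℝ} (hp0 : 0 ≤ p) (hp1 : p ≤ 1)
    (A B : ℝ) :
    ∫ u, (if u i ≤ p then A else B) ∂unifCube d = p * A + (1 - p) * B := by
  rw [← setIntegral_Icc_ite_le hp0 hp1, ← (unifCube_measurePreserving_eval i).map_eq,
    integral_map (measurable_pi_apply i).aemeasurable
      (measurable_ite_le p A B).aestronglyMeasurable]

lemma Real.sign_mul_abs (x : ℝ) : Real.sign x * |x| = x := by
  rcases lt_trichotomy x 0 with hx | rfl | hx
  · rw [Real.sign_of_neg hx, abs_of_neg hx]; ring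
  · simp
  · rw [Real.sign_of_pos hx, abs_of_pos hx]; ring

section Coordinates

variable {d : ℕ} (v : EuclideanSpace ℝ (Fin d)) (i : Fin d)

lemma abs_apply_div_norm_mem_Icc : |v i| / ‖v‖ ∈ Set.Icc 0 1 :=
  ⟨by positivity, div_le_one_of_le₀ (by simpa using PiLp.norm_apply_le v i) (norm_nonneg v)⟩

lemma norm_mul_sign_mul_abs_apply_div_norm : ‖v‖ * Real.sign (v i) * (|v i| / ‖v‖) = v i := by
  have hv : ‖v‖ = 0 → |v i| = 0 := fun h => by simp [norm_eq_zero.1 h]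
  rw [mul_right_comm, mul_div_cancel_of_imp' hv, mul_comm, Real.sign_mul_abs]

lemma quant_apply_sub (l : ℕ → ℝ) (s : ℕ) (u : Fin d → ℝ) :
    quant l s v u i - v i = ‖v‖ * Real.sign (v i) *
      ((if u i ≤ quantP l s (|v i| / ‖v‖)
        then l (levIdx l s (|v i| / ‖v‖) + 1) else l (levIdx l s (|v i| / ‖v‖))) -
        |v i| / ‖v‖) := by
  simp only [quant, PiLp.toLp_apply]
  linear_combination norm_mul_sign_mul_abs_apply_div_norm v i

lemma sq_quant_apply_sub (l : ℕ → ℝ) (s : ℕ) (u : Fin d → ℝ) :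
    (quant l s v u i - v i) ^ 2 = ‖v‖ ^ 2 * Real.sign (v i) ^ 2 *
      (if u i ≤ quantP l s (|v i| / ‖v‖)
        then (l (levIdx l s (|v i| / ‖v‖) + 1) - |v i| / ‖v‖) ^ 2
        else (l (levIdx l s (|v i| / ‖v‖)) - |v i| / ‖v‖) ^ 2) := by
  rw [quant_apply_sub]
  split_ifs <;> ring

lemma integrable_sq_quant_apply_sub (l : ℕ → ℝ) (s : ℕ) :
    Integrable (fun u => (quant l s v u i - v i) ^ 2) (unifCube d) := by
  simp_rw [sq_quant_apply_sub]
  exact (integrable_unifCube_ite_apply_le i _ _ _).const_mul _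

lemma integral_sq_quant_apply_sub {l : ℕ → ℝ} {s : ℕ} (hl : IsLevels l s) :
    ∫ u, (quant l s v u i - v i) ^ 2 ∂unifCube d = ‖v‖ ^ 2 * quantVar l s (|v i| / ‖v‖) := by
  set r := |v i| / ‖v‖ with hr_def
  set k := levIdx l s r
  obtain ⟨hkr, hrk⟩ := hl.mem_Icc_levIdx (abs_apply_div_norm_mem_Icc v i)
  have hgap : l k < l (k + 1) := hl.2.2 k (levIdx_le l s r)
  have hp : quantP l s r = (r - l k) / (l (k + 1) - l k) := rfl
  have hp0 : 0 ≤ quantP l s r := hp ▸ div_nonneg (sub_nonneg.2 hkr) (sub_pos.2 hgap).le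
  have hp1 : quantP l s r ≤ 1 := hp ▸ div_le_one_of_le₀ (by linarith) (sub_pos.2 hgap).le
  have hsign : Real.sign (v i) ^ 2 * quantVar l s r = quantVar l s r := by
    rcases eq_or_ne (v i) 0 with h | h
    · rw [hr_def, h, abs_zero, zero_div, quantVar_zero hl, mul_zero]
    · rcases Real.sign_apply_eq_of_ne_zero _ h with h' | h' <;> simp [h']
  simp_rw [sq_quant_apply_sub v i l s]
  rw [integral_const_mul, integral_unifCube_ite_apply_le i hp0 hp1, hp, two_point_variance hgap,
    mul_assoc, ← quantVar, hsign]

lemma sum_sq_abs_apply_div_norm_le_one (B : Finset (Fin d)) :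
    ∑ i ∈ B, (|v i| / ‖v‖) ^ 2 ≤ 1 :=
  calc ∑ i ∈ B, (|v i| / ‖v‖) ^ 2 ≤ ∑ i, (|v i| / ‖v‖) ^ 2 :=
        Finset.sum_le_univ_sum_of_nonneg fun _ => sq_nonneg _
    _ = ‖v‖ ^ 2 / ‖v‖ ^ 2 := by
        simp_rw [div_pow, ← Finset.sum_div, sq_abs]
        rw [EuclideanSpace.norm_sq_eq]
        simp
    _ ≤ 1 := div_self_le_one _

end Coordinates

theorem integral_sq_norm_quant_sub {l : ℕ → ℝ} {s d : ℕ} (hl : IsLevels l s)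
    (v : EuclideanSpace ℝ (Fin d)) :
    ∫ u, ‖quant l s v u - v‖ ^ 2 ∂unifCube d = ‖v‖ ^ 2 * ∑ i, quantVar l s (|v i| / ‖v‖) := by
  have hcoord : ∀ u, ‖quant l s v u - v‖ ^ 2 = ∑ i, (quant l s v u i - v i) ^ 2 := fun u => by
    simp [EuclideanSpace.norm_sq_eq]
  simp_rw [hcoord]
  rw [integral_finsetSum _ fun i _ => integrable_sq_quant_apply_sub v i l s, Finset.mul_sum]
  exact Finset.sum_congr rfl fun i _ => integral_sq_quant_apply_sub v i hl

theorem integral_sq_norm_quant_sub_le {l : ℕ → ℝ} {s d : ℕ} (hl : IsLevels l s)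
    (v : EuclideanSpace ℝ (Fin d)) :
    ∫ u, ‖quant l s v u - v‖ ^ 2 ∂unifCube d ≤
      ‖v‖ ^ 2 * ∑ m ∈ Finset.range (s + 1),
        min ((l (m + 1) - l m) ^ 2 * {i | |v i| / ‖v‖ ∈ levelBin l m}.ncard / 4)
          ((l (m + 1) - l m) * √({i | |v i| / ‖v‖ ∈ levelBin l m}.ncard : ℝ)) := by
  classical
  rw [integral_sq_norm_quant_sub hl]
  refine mul_le_mul_of_nonneg_left ?_ (sq_nonneg _)
  simp_rw [← Finset.coe_filter_univ, Set.ncard_coe_finset]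
  refine (Finset.sum_le_sum_sum_of_forall_exists_mem (t := Finset.range (s + 1))
    (B := fun m => Finset.univ.filter fun i => |v i| / ‖v‖ ∈ levelBin l m)
    (fun i => hl.quantVar_nonneg (abs_apply_div_norm_mem_Icc v i)) fun i => ?_).trans ?_
  · obtain ⟨m, hm, hbin⟩ := exists_mem_levelBin (l := l) (s := s)
      (hl.1 ▸ hl.2.1 ▸ abs_apply_div_norm_mem_Icc v i)
    exact ⟨m, hm, Finset.mem_filter.2 ⟨Finset.mem_univ i, hbin⟩⟩
  · refine Finset.sum_le_sum fun m hm => sum_quantVar_le_min hl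
      (Nat.lt_succ_iff.1 (Finset.mem_range.1 hm)) (fun i hi => ?_)
      (sum_sq_abs_apply_div_norm_le_one v _)
    exact levelBin_subset_Icc l m (Finset.mem_filter.1 hi).2
lemma nuqLevels_zero (s : ℕ) : nuqLevels s 0 = 0 := if_pos rfl

lemma nuqLevels_succ (s j : ℕ) : nuqLevels s (j + 1) = 2 ^ ((j : ℤ) - s) := by
  simp [nuqLevels]

lemma nuqLevels_isLevels (s : ℕ) : IsLevels (nuqLevels s) s := by
  refine ⟨nuqLevels_zero s, by simp [nuqLevels_succ], fun j _ => ?_⟩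
  cases j with
  | zero => rw [nuqLevels_zero, nuqLevels_succ]; positivity
  | succ j =>
    rw [nuqLevels_succ, nuqLevels_succ]
    exact zpow_lt_zpow_right₀ one_lt_two (by push_cast; omega)

lemma levelBin_nuqLevels_zero (s : ℕ) :
    levelBin (nuqLevels s) 0 = Set.Icc 0 ((2 : ℝ) ^ (-(s : ℤ))) := by
  simp [levelBin, nuqLevels_zero, nuqLevels_succ]

lemma levelBin_nuqLevels_succ (s j : ℕ) :
    levelBin (nuqLevels s) (j + 1) =
      Set.Ioc ((2 : ℝ) ^ ((j : ℤ) - s)) ((2 : ℝ) ^ ((j : ℤ) + 1 - s)) := by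
  simp [levelBin, nuqLevels_succ]

lemma nuqLevels_one_sub_zero (s : ℕ) : nuqLevels s 1 - nuqLevels s 0 = 2 ^ (-(s : ℤ)) := by
  simp [nuqLevels_zero, nuqLevels_succ]

lemma nuqLevels_succ_succ_sub (s j : ℕ) :
    nuqLevels s (j + 1 + 1) - nuqLevels s (j + 1) = 2 ^ ((j : ℤ) - s) := by
  rw [nuqLevels_succ, nuqLevels_succ, Nat.cast_succ, add_sub_right_comm, zpow_add_one₀ two_ne_zero]
  ring

lemma two_zpow_two_mul (n : ℤ) : (2 : ℝ) ^ (2 * n) = ((2 : ℝ) ^ n) ^ 2 := by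
  rw [mul_comm, zpow_mul, zpow_two, sq]

theorem nuq_variance_bound_bins_general (d s : ℕ) (v : EuclideanSpace ℝ (Fin d)) :
    (∫ u, ‖quant (nuqLevels s) s v u - v‖ ^ 2 ∂(unifCube d)) ≤
      ‖v‖ ^ 2 *
        (min ((2:ℝ) ^ (-(2 * (s:ℤ))) *
                (({i : Fin d | |v i| / ‖v‖ ∈ Set.Icc 0 ((2:ℝ) ^ (-(s:ℤ)))}).ncard : ℝ) / 4)
             ((2:ℝ) ^ (-(s:ℤ)) *
                Real.sqrt (({i : Fin d | |v i| / ‖v‖ ∈ Set.Icc 0 ((2:ℝ) ^ (-(s:ℤ)))}).ncard)) +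
          ∑ j ∈ Finset.range s,
            min ((2:ℝ) ^ (2 * ((j:ℤ) - (s:ℤ))) *
                  (({i : Fin d | |v i| / ‖v‖ ∈
                      Set.Ioc ((2:ℝ) ^ ((j:ℤ) - (s:ℤ))) ((2:ℝ) ^ ((j:ℤ) + 1 - (s:ℤ)))}).ncard : ℝ)
                    / 4)
                ((2:ℝ) ^ ((j:ℤ) - (s:ℤ)) *
                  Real.sqrt (({i : Fin d | |v i| / ‖v‖ ∈
                      Set.Ioc ((2:ℝ) ^ ((j:ℤ) - (s:ℤ)))
                        ((2:ℝ) ^ ((j:ℤ) + 1 - (s:ℤ)))}).ncard))) := by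
  have h := integral_sq_norm_quant_sub_le (nuqLevels_isLevels s) v
  rw [Finset.sum_range_succ', add_comm] at h
  simp only [zero_add, levelBin_nuqLevels_zero, levelBin_nuqLevels_succ, nuqLevels_one_sub_zero,
    nuqLevels_succ_succ_sub] at h
  simpa only [neg_mul_eq_mul_neg, two_zpow_two_mul] using h

/-- **Variance bound in terms of bin counts** (equation (29)): with the NUQSGD levels, letting
`d₀ = #{i : rᵢ ∈ [0, 2^{−s}]}` and `d_{j+1} = #{i : rᵢ ∈ (2^{j−s}, 2^{j+1−s}]}`,
`E[‖Q_s(v) − v‖²] ≤ ‖v‖² (min{2^{−2s}d₀/4, 2^{−s}√d₀}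
  + Σ_{j=0}^{s−1} min{2^{2(j−s)}d_{j+1}/4, 2^{j−s}√d_{j+1}})`. -/
theorem nuq_variance_bound_bins (d s : ℕ) (hd : 1 ≤ d) (hs : 1 ≤ s)
    (v : EuclideanSpace ℝ (Fin d)) (hv : v ≠ 0) :
    (∫ u, ‖quant (nuqLevels s) s v u - v‖ ^ 2 ∂(unifCube d)) ≤
      ‖v‖ ^ 2 *
        (min ((2:ℝ) ^ (-(2 * (s:ℤ))) *
                (({i : Fin d | |v i| / ‖v‖ ∈ Set.Icc 0 ((2:ℝ) ^ (-(s:ℤ)))}).ncard : ℝ) / 4)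
             ((2:ℝ) ^ (-(s:ℤ)) *
                Real.sqrt (({i : Fin d | |v i| / ‖v‖ ∈ Set.Icc 0 ((2:ℝ) ^ (-(s:ℤ)))}).ncard)) +
          ∑ j ∈ Finset.range s,
            min ((2:ℝ) ^ (2 * ((j:ℤ) - (s:ℤ))) *
                  (({i : Fin d | |v i| / ‖v‖ ∈
                      Set.Ioc ((2:ℝ) ^ ((j:ℤ) - (s:ℤ))) ((2:ℝ) ^ ((j:ℤ) + 1 - (s:ℤ)))}).ncard : ℝ)
                    / 4)
                ((2:ℝ) ^ ((j:ℤ) - (s:ℤ)) *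
                  Real.sqrt (({i : Fin d | |v i| / ‖v‖ ∈
                      Set.Ioc ((2:ℝ) ^ ((j:ℤ) - (s:ℤ)))
                        ((2:ℝ) ^ ((j:ℤ) + 1 - (s:ℤ)))}).ncard))) :=
  nuq_variance_bound_bins_general d s v
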